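/- Let Σ be a finite signature, C the set of constants, and Γ₁, Γ₂ finite sets of ground term equations. Let B = C ∪ ST(Γ₁ ∪ Γ₂), and for i = 1,2 let B_i be the partial algebra whose universe is { [t]_{Γ_i} : t ∈ B } with f([t₁],…,[t_k]) defined to be [f t₁…t_k]_{Γ_i} when this class contains a term of B, and undefined otherwise. Then F_{Γ₁} ≅ F_{Γ₂} if and only if B₁ ≅ B₂. -/

import Mathlib

namespace AFA

open Classical

/-- A functional signature: operation symbols with arities. Constants are arity-0 symbols. -/
structure Sig where
  Op : Type
  arity : Op → ℕ

/-- Ground terms over a signature. -/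
inductive Tm (S : Sig) : Type
  | node (f : S.Op) (args : Fin (S.arity f) → Tm S) : Tm S

/-- The ground term given by a constant symbol. -/
def constTm (S : Sig) (c : S.Op) (h : S.arity c = 0) : Tm S :=
  Tm.node c (fun i => absurd i.isLt (by omega))

/-- Height of a ground term (constants have height 0). -/
def Tm.height {S : Sig} : Tm S → ℕ
  | Tm.node _ a => Finset.univ.sup fun i => (a i).height + 1

/-- The i-th immediate subterm (child of the root of the syntax tree), if it exists. -/
def Tm.child {S : Sig} : Tm S → ℕ → Option (Tm S)
  | Tm.node f a, i => if h : i < S.arity f then some (a ⟨i, h⟩) else none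

/-- A total algebra over the signature `S`. -/
structure Alg (S : Sig) where
  carrier : Type
  op : (f : S.Op) → (Fin (S.arity f) → carrier) → carrier

/-- Homomorphism of total algebras. -/
structure Hom {S : Sig} (A B : Alg S) where
  toFun : A.carrier → B.carrier
  map : ∀ (f : S.Op) (a : Fin (S.arity f) → A.carrier),
    toFun (A.op f a) = B.op f (fun i => toFun (a i))

/-- Evaluation of a ground term in an algebra. -/
def Tm.eval {S : Sig} (A : Alg S) : Tm S → A.carrier
  | Tm.node f a => A.op f (fun i => (a i).eval A)

/-- An algebra is generated by the constants iff every element is the value of a ground term. -/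
def GeneratedAlg {S : Sig} (A : Alg S) : Prop :=
  ∀ x : A.carrier, ∃ t : Tm S, t.eval A = x

/-- Isomorphism of total algebras. -/
def AlgIso {S : Sig} (A B : Alg S) : Prop :=
  ∃ h : Hom A B, Function.Bijective h.toFun

/-- Derivability in equational logic from a set `Γ` of ground equations:
the smallest congruence containing `Γ`. `Thm Γ p q` means `Γ ⊢ p = q`. -/
inductive Thm {S : Sig} (Γ : Set (Tm S × Tm S)) : Tm S → Tm S → Prop
  | ax {p q : Tm S} : (p, q) ∈ Γ → Thm Γ p q
  | refl (t : Tm S) : Thm Γ t t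
  | symm {p q : Tm S} : Thm Γ p q → Thm Γ q p
  | trans {p q r : Tm S} : Thm Γ p q → Thm Γ q r → Thm Γ p r
  | congr {f : S.Op} {a b : Fin (S.arity f) → Tm S} :
      (∀ i, Thm Γ (a i) (b i)) → Thm Γ (Tm.node f a) (Tm.node f b)

/-- The setoid `∼_Γ` on ground terms. -/
def thmSetoid {S : Sig} (Γ : Set (Tm S × Tm S)) : Setoid (Tm S) :=
  ⟨Thm Γ, ⟨fun t => Thm.refl t, fun h => Thm.symm h, fun h₁ h₂ => Thm.trans h₁ h₂⟩⟩

/-- The quotient algebra `F_Γ = F/∼_Γ`. -/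
noncomputable def FGamma {S : Sig} (Γ : Set (Tm S × Tm S)) : Alg S where
  carrier := Quotient (thmSetoid Γ)
  op f a := Quotient.mk (thmSetoid Γ) (Tm.node f (fun i => (a i).out))

/-- Single-step ground rewriting: replace a subterm which is one side of an
equation of `Γ` by the other side. -/
inductive Step {S : Sig} (Γ : Set (Tm S × Tm S)) : Tm S → Tm S → Prop
  | here {p q : Tm S} : (p, q) ∈ Γ ∨ (q, p) ∈ Γ → Step Γ p q
  | sub {f : S.Op} {a b : Fin (S.arity f) → Tm S} (i : Fin (S.arity f)) :
      Step Γ (a i) (b i) → (∀ j, j ≠ i → a j = b j) → Step Γ (Tm.node f a) (Tm.node f b)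

/-- Subterm relation on ground terms. -/
inductive Subterm {S : Sig} : Tm S → Tm S → Prop
  | refl (t : Tm S) : Subterm t t
  | step {s : Tm S} {f : S.Op} {a : Fin (S.arity f) → Tm S} (i : Fin (S.arity f)) :
      Subterm s (a i) → Subterm s (Tm.node f a)

/-- `p` occurs in `Γ` (is one side of an equation of `Γ`). -/
def SideOf {S : Sig} (Γ : Set (Tm S × Tm S)) (p : Tm S) : Prop :=
  ∃ e ∈ Γ, p = e.1 ∨ p = e.2

/-- `ST Γ`: all subterms of terms occurring in `Γ`. -/
def ST {S : Sig} (Γ : Set (Tm S × Tm S)) : Set (Tm S) :=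
  {t | ∃ e ∈ Γ, Subterm t e.1 ∨ Subterm t e.2}

/-- A term "has a type" if it is `∼_Γ`-equivalent to a term mentioned in `Γ`. -/
def HasType {S : Sig} (Γ : Set (Tm S × Tm S)) (t : Tm S) : Prop :=
  ∃ p, SideOf Γ p ∧ Thm Γ t p

/-- `w` is an immediate subterm of `u`. -/
def ImmSub {S : Sig} (w u : Tm S) : Prop :=
  ∃ (f : S.Op) (a : Fin (S.arity f) → Tm S) (i : Fin (S.arity f)), u = Tm.node f a ∧ a i = w

/-- Edge relation of the quotient graph `R̂_Γ`: there is a directed edge from the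
class of `u` to the class of `w` iff some `Γ`-subterm-occurrence `u'` equivalent to `u`
has an immediate subterm `w'` equivalent to `w`. -/
def EdgeHat {S : Sig} (Γ : Set (Tm S × Tm S)) (u w : Tm S) : Prop :=
  ∃ u' w', u' ∈ ST Γ ∧ w' ∈ ST Γ ∧ Thm Γ u u' ∧ Thm Γ w w' ∧ ImmSub w' u'

/-- A directed cycle of `R̂_Γ` is reachable from (the class of) `t` by a directed path. -/
def CyclicFrom {S : Sig} (Γ : Set (Tm S × Tm S)) (t : Tm S) : Prop :=
  ∃ u, Relation.ReflTransGen (EdgeHat Γ) t u ∧ Relation.TransGen (EdgeHat Γ) u u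

/-- `t` is of cyclic type: `t` is `∼_Γ`-equivalent to a term mentioned in `Γ`
whose type is cyclic. -/
def OfCyclicType {S : Sig} (Γ : Set (Tm S × Tm S)) (t : Tm S) : Prop :=
  ∃ p, SideOf Γ p ∧ Thm Γ t p ∧ CyclicFrom Γ p

/-- The canonical representative map: given a choice function `r` assigning to each
typed term the fixed representative of its type, replace each maximal typed subterm
of `t` by the chosen representative. -/
noncomputable def repMap {S : Sig} (Γ : Set (Tm S × Tm S)) (r : Tm S → Tm S) : Tm S → Tm S
  | Tm.node f a =>
      if HasType Γ (Tm.node f a) then r (Tm.node f a)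
      else Tm.node f fun i => repMap Γ r (a i)

/-- A partial algebra over `S`. -/
structure PAlg (S : Sig) where
  carrier : Type
  pop : (f : S.Op) → (Fin (S.arity f) → carrier) → Option carrier

/-- An embedding exhibiting the partial algebra `B` as a substructure of the
total algebra `A`. -/
structure PEmb {S : Sig} (B : PAlg S) (A : Alg S) where
  toFun : B.carrier → A.carrier
  inj : Function.Injective toFun
  map : ∀ (f : S.Op) (b : Fin (S.arity f) → B.carrier) (c : B.carrier),
    B.pop f b = some c → A.op f (fun i => toFun (b i)) = toFun c

/-- `A` is free over the partial algebra `B` (via the substructure embedding `e`):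
every (constant-generated) algebra containing `B` as a substructure is a homomorphic
image of `A` via a homomorphism fixing `B` pointwise. -/
def IsFreeOver {S : Sig} (A : Alg S) (B : PAlg S) (e : PEmb B A) : Prop :=
  ∀ (C : Alg S), GeneratedAlg C → ∀ e' : PEmb B C,
    ∃ h : Hom A C, Function.Surjective h.toFun ∧ ∀ b, h.toFun (e.toFun b) = e'.toFun b

/-- Elements of a partial algebra generated from constants via the defined operations. -/
inductive PGen {S : Sig} (B : PAlg S) : B.carrier → Prop
  | op {f : S.Op} {b : Fin (S.arity f) → B.carrier} {c : B.carrier} :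
      (∀ i, PGen B (b i)) → B.pop f b = some c → PGen B c

/-- A partial algebra is generated by the constants. -/
def PGenerated {S : Sig} (B : PAlg S) : Prop := ∀ x, PGen B x

/-- Raw `B`-terms: terms built over elements of the partial algebra `B`. -/
inductive BTm {S : Sig} (B : PAlg S) : Type
  | base (b : B.carrier) : BTm B
  | app (f : S.Op) (args : Fin (S.arity f) → BTm B) : BTm B

/-- Normal `B`-terms: an application node is allowed only when it cannot be
evaluated in `B`. -/
inductive Normal {S : Sig} {B : PAlg S} : BTm B → Prop
  | base (b : B.carrier) : Normal (BTm.base b)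
  | app {f : S.Op} {args : Fin (S.arity f) → BTm B} :
      (∀ i, Normal (args i)) →
      ¬(∃ (b : Fin (S.arity f) → B.carrier) (c : B.carrier),
          (∀ i, args i = BTm.base (b i)) ∧ B.pop f b = some c) →
      Normal (BTm.app f args)

/-- The free total extension `F(B)` of the partial algebra `B`: its elements are
the normal `B`-terms; an operation evaluates in `B` whenever possible, and forms
a formal term otherwise. -/
noncomputable def FB {S : Sig} (B : PAlg S) : Alg S where
  carrier := {t : BTm B // Normal t}
  op f args :=
    if h : ∃ (b : Fin (S.arity f) → B.carrier) (c : B.carrier),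
        (∀ i, (args i).1 = BTm.base (b i)) ∧ B.pop f b = some c
    then ⟨BTm.base h.choose_spec.choose, Normal.base _⟩
    else ⟨BTm.app f (fun i => (args i).1), Normal.app (fun i => (args i).2) h⟩

/-- The canonical inclusion of `B` into `F(B)`. -/
def embB {S : Sig} (B : PAlg S) (b : B.carrier) : (FB B).carrier :=
  ⟨BTm.base b, Normal.base b⟩

/-- Terms with variables. -/
inductive TmV (S : Sig) : Type
  | var (n : ℕ) : TmV S
  | node (f : S.Op) (args : Fin (S.arity f) → TmV S) : TmV S

/-- Ground substitution into a term with variables. -/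
def TmV.substG {S : Sig} (ρ : ℕ → Tm S) : TmV S → Tm S
  | TmV.var n => ρ n
  | TmV.node f a => Tm.node f (fun i => (a i).substG ρ)

/-- Evaluation of a term with variables under an assignment. -/
def TmV.evalV {S : Sig} (A : Alg S) (ρ : ℕ → A.carrier) : TmV S → A.carrier
  | TmV.var n => ρ n
  | TmV.node f a => A.op f (fun i => (a i).evalV A ρ)

/-- All ground instances of a set of (possibly non-ground) equations. -/
def GroundInstances {S : Sig} (Γ : Set (TmV S × TmV S)) : Set (Tm S × Tm S) :=
  {pq | ∃ e ∈ Γ, ∃ ρ : ℕ → Tm S, pq.1 = e.1.substG ρ ∧ pq.2 = e.2.substG ρ}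

/-- `A ⊨ Γ` for a set of (possibly non-ground) equations. -/
def SatV {S : Sig} (A : Alg S) (Γ : Set (TmV S × TmV S)) : Prop :=
  ∀ e ∈ Γ, ∀ ρ : ℕ → A.carrier, TmV.evalV A ρ e.1 = TmV.evalV A ρ e.2

/-- The finite partial algebra of `∼_Γ`-classes containing a term of height `≤ N`. -/
noncomputable def heightPAlg {S : Sig} (Γ : Set (Tm S × Tm S)) (N : ℕ) : PAlg S where
  carrier := {x : Quotient (thmSetoid Γ) //
    ∃ t : Tm S, t.height ≤ N ∧ Quotient.mk (thmSetoid Γ) t = x}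
  pop f b :=
    if h : ∃ t : Tm S, t.height ≤ N ∧
        Quotient.mk (thmSetoid Γ) t =
          Quotient.mk (thmSetoid Γ) (Tm.node f (fun i => (b i).1.out))
    then some ⟨Quotient.mk (thmSetoid Γ) (Tm.node f (fun i => (b i).1.out)), h⟩
    else none

/-- The set `B = C ∪ ST(Γ₁ ∪ Γ₂)`. -/
def BSet {S : Sig} (Γ₁ Γ₂ : Set (Tm S × Tm S)) : Set (Tm S) :=
  {t | (∃ (c : S.Op) (h : S.arity c = 0), t = constTm S c h) ∨ t ∈ ST (Γ₁ ∪ Γ₂)}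

/-- The partial algebra induced by `Γ` on the `∼_Γ`-classes of terms of `Bs`:
`f` applied to classes is defined iff the class of the resulting term again
contains a term of `Bs`. -/
noncomputable def BAlg {S : Sig} (Γ : Set (Tm S × Tm S)) (Bs : Set (Tm S)) : PAlg S where
  carrier := Quotient (Setoid.comap (Subtype.val : Bs → Tm S) (thmSetoid Γ))
  pop f b :=
    if h : ∃ u : Bs, Thm Γ u.1 (Tm.node f (fun i => ((b i).out).1))
    then some (Quotient.mk (Setoid.comap (Subtype.val : Bs → Tm S) (thmSetoid Γ)) h.choose)
    else none

/-- The class of `t ∈ Bs` as an element of `BAlg Γ Bs`. -/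
noncomputable def BAlgMk {S : Sig} (Γ : Set (Tm S × Tm S)) (Bs : Set (Tm S))
    (t : Tm S) (ht : t ∈ Bs) : (BAlg Γ Bs).carrier :=
  Quotient.mk (Setoid.comap (Subtype.val : Bs → Tm S) (thmSetoid Γ)) ⟨t, ht⟩

/-- Isomorphism of partial algebras: a bijection preserving definedness and
values of the partial operations in both directions. -/
def PIso {S : Sig} (B₁ B₂ : PAlg S) : Prop :=
  ∃ e : B₁.carrier ≃ B₂.carrier,
    ∀ (f : S.Op) (b : Fin (S.arity f) → B₁.carrier),
      Option.map e (B₁.pop f b) = B₂.pop f (fun i => e (b i))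

/-- The algebra structure on `∼_Γ`-classes of `ST(Γ)`, defined via the closure
hypothesis `hf`. -/
noncomputable def STAlg {S : Sig} (Γ : Set (Tm S × Tm S))
    (hf : ∀ (f : S.Op) (a : Fin (S.arity f) → Tm S), (∀ i, a i ∈ ST Γ) →
      ∃ u ∈ ST Γ, Thm Γ (Tm.node f a) u) : Alg S where
  carrier := Quotient (Setoid.comap (Subtype.val : ST Γ → Tm S) (thmSetoid Γ))
  op f a :=
    let h := hf f (fun i => ((a i).out).1) (fun i => ((a i).out).2)
    Quotient.mk (Setoid.comap (Subtype.val : ST Γ → Tm S) (thmSetoid Γ))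
      ⟨h.choose, h.choose_spec.1⟩

/-- The map `φ : F → ST(Γ)` defined inductively by choosing, at each application,
a `∼_Γ`-equivalent member of `ST(Γ)`. -/
noncomputable def phiST {S : Sig} (Γ : Set (Tm S × Tm S))
    (hf : ∀ (f : S.Op) (a : Fin (S.arity f) → Tm S), (∀ i, a i ∈ ST Γ) →
      ∃ u ∈ ST Γ, Thm Γ (Tm.node f a) u) : Tm S → {u : Tm S // u ∈ ST Γ}
  | Tm.node f a =>
      let ih := fun i => phiST Γ hf (a i)
      let h := hf f (fun i => (ih i).1) (fun i => (ih i).2)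
      ⟨h.choose, h.choose_spec.1⟩

/-- The tester predicate `Is_f` on `F(B)`: holds of `a` iff `a ∉ B` and `a` is a
formal term with head symbol `f`. -/
def IsTester {S : Sig} {B : PAlg S} (f : S.Op) (a : (FB B).carrier) : Prop :=
  ∃ args : Fin (S.arity f) → BTm B, a.1 = BTm.app f args


/-! Both isomorphisms are equivalent to `∼_{Γ₁} = ∼_{Γ₂}`. A homomorphism out of the
term-generated algebra `F_{Γ₁}` must send `[t]_{Γ₁}` to `[t]_{Γ₂}`, so an injective one
identifies the two congruences. An isomorphism `B₁ ≅ B₂` also sends `[t]_{Γ₁}` to `[t]_{Γ₂}`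
for every `t ∈ B`, by induction on `t`, because `B` is closed under subterms and the operations
of `B₁`, `B₂` are defined exactly on the applications that stay in `B`. As `B` contains both
sides of every equation of `Γ₁ ∪ Γ₂`, the congruences generated then coincide. -/

theorem Hom.toFun_eval {S : Sig} {A B : Alg S} (h : Hom A B) (t : Tm S) :
    h.toFun (t.eval A) = t.eval B := by
  induction t with
  | node f a ih => simp only [Tm.eval, h.map, ih]

theorem mk_eq_mk_iff_thm {S : Sig} {Γ : Set (Tm S × Tm S)} {s t : Tm S} :
    Quotient.mk (thmSetoid Γ) s = Quotient.mk (thmSetoid Γ) t ↔ Thm Γ s t :=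
  Quotient.eq

theorem eval_FGamma {S : Sig} (Γ : Set (Tm S × Tm S)) (t : Tm S) :
    t.eval (FGamma Γ) = Quotient.mk (thmSetoid Γ) t := by
  induction t with
  | node f a ih =>
    exact Quotient.sound <| Thm.congr fun i =>
      mk_eq_mk_iff_thm.1 ((Quotient.out_eq _).trans (ih i))

theorem Thm.of_ax {S : Sig} {Γ Γ' : Set (Tm S × Tm S)}
    (hax : ∀ p q, (p, q) ∈ Γ → Thm Γ' p q) {s t : Tm S} (h : Thm Γ s t) : Thm Γ' s t := by
  induction h with
  | ax h => exact hax _ _ h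
  | refl t => exact Thm.refl t
  | symm _ ih => exact ih.symm
  | trans _ _ ih₁ ih₂ => exact ih₁.trans ih₂
  | congr _ ih => exact Thm.congr ih

theorem thm_eq_of_iff_on {S : Sig} {Γ₁ Γ₂ : Set (Tm S × Tm S)} {Bs : Set (Tm S)}
    (hsides : ∀ p q, (p, q) ∈ Γ₁ ∪ Γ₂ → p ∈ Bs ∧ q ∈ Bs)
    (hiff : ∀ s ∈ Bs, ∀ t ∈ Bs, Thm Γ₁ s t ↔ Thm Γ₂ s t) :
    Thm (S := S) Γ₁ = Thm Γ₂ := by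
  have hax : ∀ p q, (p, q) ∈ Γ₁ ∪ Γ₂ → (Thm Γ₁ p q ↔ Thm Γ₂ p q) := fun p q hpq =>
    hiff p (hsides p q hpq).1 q (hsides p q hpq).2
  funext s t
  exact propext ⟨Thm.of_ax fun p q hpq => (hax p q (Or.inl hpq)).1 (Thm.ax hpq),
    Thm.of_ax fun p q hpq => (hax p q (Or.inr hpq)).2 (Thm.ax hpq)⟩

theorem thmSetoid_eq_of_thm_eq {S : Sig} {Γ₁ Γ₂ : Set (Tm S × Tm S)}
    (h : Thm (S := S) Γ₁ = Thm Γ₂) : thmSetoid Γ₁ = thmSetoid Γ₂ :=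
  Setoid.ext fun s t => iff_of_eq (congrFun (congrFun h s) t)

theorem FGamma_eq_of_thm_eq {S : Sig} {Γ₁ Γ₂ : Set (Tm S × Tm S)}
    (h : Thm (S := S) Γ₁ = Thm Γ₂) : FGamma Γ₁ = FGamma Γ₂ := by
  unfold FGamma
  rw [thmSetoid_eq_of_thm_eq h]

theorem BAlg_eq_of_thm_eq {S : Sig} {Γ₁ Γ₂ : Set (Tm S × Tm S)} (Bs : Set (Tm S))
    (h : Thm (S := S) Γ₁ = Thm Γ₂) : BAlg Γ₁ Bs = BAlg Γ₂ Bs := by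
  unfold BAlg
  rw [thmSetoid_eq_of_thm_eq h, h]

theorem AlgIso.refl {S : Sig} (A : Alg S) : AlgIso A A :=
  ⟨⟨id, fun _ _ => rfl⟩, Function.bijective_id⟩

theorem PIso.refl {S : Sig} (B : PAlg S) : PIso B B :=
  ⟨Equiv.refl _, fun _ _ => Option.map_id'⟩

theorem thm_eq_of_algIso {S : Sig} {Γ₁ Γ₂ : Set (Tm S × Tm S)}
    (h : AlgIso (FGamma Γ₁) (FGamma Γ₂)) : Thm (S := S) Γ₁ = Thm Γ₂ := by
  obtain ⟨h, hinj, -⟩ := h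
  have hmk : ∀ t, h.toFun (Quotient.mk (thmSetoid Γ₁) t) = Quotient.mk (thmSetoid Γ₂) t :=
    fun t => by rw [← eval_FGamma, ← eval_FGamma, h.toFun_eval]
  funext s t
  refine propext ?_
  calc Thm Γ₁ s t ↔ Quotient.mk (thmSetoid Γ₁) s = Quotient.mk _ t := mk_eq_mk_iff_thm.symm
    _ ↔ h.toFun (Quotient.mk _ s) = h.toFun (Quotient.mk _ t) := hinj.eq_iff.symm
    _ ↔ Thm Γ₂ s t := by rw [hmk, hmk]; exact mk_eq_mk_iff_thm

theorem Subterm.trans {S : Sig} {r s t : Tm S} (hrs : Subterm r s) (hst : Subterm s t) :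
    Subterm r t := by
  induction hst with
  | refl => exact hrs
  | step i _ ih => exact Subterm.step i ih

theorem BSet.mem_of_node_mem {S : Sig} {Γ₁ Γ₂ : Set (Tm S × Tm S)} {f : S.Op}
    {a : Fin (S.arity f) → Tm S} (ha : Tm.node f a ∈ BSet Γ₁ Γ₂) (i : Fin (S.arity f)) :
    a i ∈ BSet Γ₁ Γ₂ := by
  have hchild : Subterm (a i) (Tm.node f a) := Subterm.step i (Subterm.refl _)
  rcases ha with ⟨c, hc, hconst⟩ | ⟨e, he, hsub⟩
  · obtain ⟨rfl, -⟩ := Tm.node.inj hconst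
    exact absurd i.isLt (by omega)
  · exact Or.inr ⟨e, he, hsub.imp hchild.trans hchild.trans⟩

theorem BSet.mem_of_mem_union {S : Sig} {Γ₁ Γ₂ : Set (Tm S × Tm S)} {p q : Tm S}
    (h : (p, q) ∈ Γ₁ ∪ Γ₂) : p ∈ BSet Γ₁ Γ₂ ∧ q ∈ BSet Γ₁ Γ₂ :=
  ⟨Or.inr ⟨(p, q), h, Or.inl (Subterm.refl p)⟩, Or.inr ⟨(p, q), h, Or.inr (Subterm.refl q)⟩⟩

section BAlg

variable {S : Sig} (Γ : Set (Tm S × Tm S)) (Bs : Set (Tm S))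

theorem BAlgMk_eq_iff {s t : Tm S} (hs : s ∈ Bs) (ht : t ∈ Bs) :
    BAlgMk Γ Bs s hs = BAlgMk Γ Bs t ht ↔ Thm Γ s t :=
  Quotient.eq

theorem BAlg.pop_BAlgMk {f : S.Op} {a : Fin (S.arity f) → Tm S} (ha : ∀ i, a i ∈ Bs)
    (hfa : Tm.node f a ∈ Bs) :
    (BAlg Γ Bs).pop f (fun i => BAlgMk Γ Bs (a i) (ha i)) =
      some (BAlgMk Γ Bs (Tm.node f a) hfa) := by
  have hout : Thm Γ (Tm.node f a)
      (Tm.node f fun i => ((BAlgMk Γ Bs (a i) (ha i)).out).1) :=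
    Thm.congr fun i => Thm.symm (Quotient.exact (Quotient.out_eq (BAlgMk Γ Bs (a i) (ha i))))
  have hdef : ∃ u : Bs, Thm Γ u.1
      (Tm.node f fun i => ((BAlgMk Γ Bs (a i) (ha i)).out).1) := ⟨⟨_, hfa⟩, hout⟩
  show (if h : _ then _ else _) = _
  exact (dif_pos hdef).trans (congrArg some (Quotient.sound (hdef.choose_spec.trans hout.symm)))

variable {Γ Bs}

theorem BAlg.apply_BAlgMk_of_map_pop {Γ₂ : Set (Tm S × Tm S)}
    (hclosed : ∀ {f : S.Op} {a : Fin (S.arity f) → Tm S}, Tm.node f a ∈ Bs → ∀ i, a i ∈ Bs)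
    (e : (BAlg Γ Bs).carrier ≃ (BAlg Γ₂ Bs).carrier)
    (he : ∀ (f : S.Op) (b : Fin (S.arity f) → (BAlg Γ Bs).carrier),
      Option.map e ((BAlg Γ Bs).pop f b) = (BAlg Γ₂ Bs).pop f (fun i => e (b i)))
    (t : Tm S) (ht : t ∈ Bs) : e (BAlgMk Γ Bs t ht) = BAlgMk Γ₂ Bs t ht := by
  induction t with
  | node f a ih =>
    have ha : ∀ i, a i ∈ Bs := hclosed ht
    have hpop := he f fun i => BAlgMk Γ Bs (a i) (ha i)
    simp only [BAlg.pop_BAlgMk Γ Bs ha ht, Option.map_some, fun i => ih i (ha i),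
      BAlg.pop_BAlgMk Γ₂ Bs ha ht] at hpop
    exact Option.some.inj hpop

end BAlg

theorem thm_eq_of_pIso {S : Sig} {Γ₁ Γ₂ : Set (Tm S × Tm S)}
    (h : PIso (BAlg Γ₁ (BSet Γ₁ Γ₂)) (BAlg Γ₂ (BSet Γ₁ Γ₂))) : Thm (S := S) Γ₁ = Thm Γ₂ := by
  obtain ⟨e, he⟩ := h
  have hmk := BAlg.apply_BAlgMk_of_map_pop BSet.mem_of_node_mem e he
  refine thm_eq_of_iff_on (fun p q => BSet.mem_of_mem_union) fun s hs t ht => ?_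
  rw [← BAlgMk_eq_iff _ _ hs ht, ← BAlgMk_eq_iff _ _ hs ht, ← e.apply_eq_iff_eq, hmk, hmk]

theorem stmt14_general (S : Sig) (Γ₁ Γ₂ : Set (Tm S × Tm S)) :
    AlgIso (FGamma Γ₁) (FGamma Γ₂) ↔
      PIso (BAlg Γ₁ (BSet Γ₁ Γ₂)) (BAlg Γ₂ (BSet Γ₁ Γ₂)) := by
  constructor
  · intro h
    rw [BAlg_eq_of_thm_eq _ (thm_eq_of_algIso h)]
    exact PIso.refl _
  · intro h
    rw [FGamma_eq_of_thm_eq (thm_eq_of_pIso h)]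
    exact AlgIso.refl _

/-- With `B = C ∪ ST(Γ₁ ∪ Γ₂)` and `B₁`, `B₂` the induced partial
algebras, `F_{Γ₁} ≅ F_{Γ₂}` iff `B₁ ≅ B₂`. -/
theorem stmt14 (S : Sig) [Fintype S.Op] (Γ₁ Γ₂ : Set (Tm S × Tm S))
    (h₁ : Γ₁.Finite) (h₂ : Γ₂.Finite) :
    AlgIso (FGamma Γ₁) (FGamma Γ₂) ↔
      PIso (BAlg Γ₁ (BSet Γ₁ Γ₂)) (BAlg Γ₂ (BSet Γ₁ Γ₂)) :=
  stmt14_general S Γ₁ Γ₂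

end AFA
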